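/- Bounds on the minmod reconstruction for a system: let θ ∈ [0,2], Δx > 0, α > 0, P ≥ 1, and ρ : ℤ → ℝ^P with ρ_i ≥ 0 entrywise and σ_i := Σ_{p=1}^P (ρ_i)_p ≤ α for all i. Define entrywise slopes and reconstructions ρ_i^E, ρ_i^W of ρ, and separately slopes and reconstructions σ_i^E, σ_i^W of σ, by the minmod procedure. Then for all i: 0 ≤ σ_i^E ≤ α and 0 ≤ σ_i^W ≤ α; each entry of ρ_i^E and ρ_i^W is non-negative; and 0 ≤ Σ_{p=1}^P (ρ_i^E)_p ≤ 2α and 0 ≤ Σ_{p=1}^P (ρ_i^W)_p ≤ 2α. -/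

import Mathlib

/-- The minmod limiter. -/
noncomputable def minmod (a b c : ℝ) : ℝ :=
  if 0 < a ∧ 0 < b ∧ 0 < c then min a (min b c)
  else if a < 0 ∧ b < 0 ∧ c < 0 then max a (max b c)
  else 0

/-- Minmod mmSlope `(ρ_x)_i`. -/
noncomputable def mmSlope (θ Δx : ℝ) (ρ : ℤ → ℝ) (i : ℤ) : ℝ :=
  minmod (θ * (ρ (i + 1) - ρ i) / Δx) ((ρ (i + 1) - ρ (i - 1)) / (2 * Δx))
    (θ * (ρ i - ρ (i - 1)) / Δx)

/-- East reconstruction `ρ_i^E`. -/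
noncomputable def recE (θ Δx : ℝ) (ρ : ℤ → ℝ) (i : ℤ) : ℝ :=
  ρ i + Δx / 2 * mmSlope θ Δx ρ i

/-- West reconstruction `ρ_i^W`. -/
noncomputable def recW (θ Δx : ℝ) (ρ : ℤ → ℝ) (i : ℤ) : ℝ :=
  ρ i - Δx / 2 * mmSlope θ Δx ρ i


/-- Total density `σ_i = Σ_p (ρ_i)_p`. -/
noncomputable def totalDensity {P : ℕ} (ρ : ℤ → Fin P → ℝ) (i : ℤ) : ℝ :=
  ∑ p, ρ i p

/-- Entrywise east reconstruction `(ρ_i^E)_p`. -/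
noncomputable def recEV (θ Δx : ℝ) {P : ℕ} (ρ : ℤ → Fin P → ℝ) (i : ℤ) (p : Fin P) : ℝ :=
  recE θ Δx (fun j => ρ j p) i

/-- Entrywise west reconstruction `(ρ_i^W)_p`. -/
noncomputable def recWV (θ Δx : ℝ) {P : ℕ} (ρ : ℤ → Fin P → ℝ) (i : ℤ) (p : Fin P) : ℝ :=
  recW θ Δx (fun j => ρ j p) i

lemma recE_bounds (θ Δx : ℝ) (hθ₀ : 0 ≤ θ) (hθ₂ : θ ≤ 2) (hΔx : 0 < Δx)
    (v : ℤ → ℝ) (i : ℤ) :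
    min (v i) (v (i + 1)) ≤ recE θ Δx v i ∧ recE θ Δx v i ≤ max (v i) (v (i + 1)) := by
  unfold recE mmSlope minmod
  set a := θ * (v (i + 1) - v i) / Δx with ha_def
  set b := (v (i + 1) - v (i - 1)) / (2 * Δx) with hb_def
  set c := θ * (v i - v (i - 1)) / Δx with hc_def
  split_ifs with h1 h2
  · obtain ⟨ha, hb, hc⟩ := h1
    have hprod : 0 < θ * (v (i + 1) - v i) := by
      have := mul_pos ha hΔx
      rwa [ha_def, div_mul_cancel₀ _ hΔx.ne'] at this
    have hd : 0 < v (i + 1) - v i := by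
      by_contra hd
      push_neg at hd
      nlinarith [mul_nonneg hθ₀ (neg_nonneg.mpr hd)]
    have hs0 : 0 < min a (min b c) := lt_min ha (lt_min hb hc)
    have hsa : min a (min b c) ≤ a := min_le_left _ _
    have haval : Δx / 2 * a = θ * (v (i + 1) - v i) / 2 := by
      rw [ha_def]; field_simp
    constructor
    · refine le_trans (min_le_left _ _) ?_
      nlinarith
    · refine le_trans ?_ (le_max_right _ _)
      nlinarith
  · obtain ⟨ha, hb, hc⟩ := h2
    have hprod : θ * (v (i + 1) - v i) < 0 := by
      have := mul_neg_of_neg_of_pos ha hΔx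
      rwa [ha_def, div_mul_cancel₀ _ hΔx.ne'] at this
    have hd : v (i + 1) - v i < 0 := by
      by_contra hd
      push_neg at hd
      nlinarith [mul_nonneg hθ₀ hd]
    have hs0 : max a (max b c) < 0 := max_lt ha (max_lt hb hc)
    have hsa : a ≤ max a (max b c) := le_max_left _ _
    have haval : Δx / 2 * a = θ * (v (i + 1) - v i) / 2 := by
      rw [ha_def]; field_simp
    constructor
    · refine le_trans (min_le_right _ _) ?_
      nlinarith
    · refine le_trans ?_ (le_max_left _ _)
      nlinarith
  · simp only [mul_zero, add_zero]
    exact ⟨min_le_left _ _, le_max_left _ _⟩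

lemma recW_bounds (θ Δx : ℝ) (hθ₀ : 0 ≤ θ) (hθ₂ : θ ≤ 2) (hΔx : 0 < Δx)
    (v : ℤ → ℝ) (i : ℤ) :
    min (v (i - 1)) (v i) ≤ recW θ Δx v i ∧ recW θ Δx v i ≤ max (v (i - 1)) (v i) := by
  unfold recW mmSlope minmod
  set a := θ * (v (i + 1) - v i) / Δx with ha_def
  set b := (v (i + 1) - v (i - 1)) / (2 * Δx) with hb_def
  set c := θ * (v i - v (i - 1)) / Δx with hc_def
  split_ifs with h1 h2
  · obtain ⟨ha, hb, hc⟩ := h1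
    have hprod : 0 < θ * (v i - v (i - 1)) := by
      have := mul_pos hc hΔx
      rwa [hc_def, div_mul_cancel₀ _ hΔx.ne'] at this
    have hd : 0 < v i - v (i - 1) := by
      by_contra hd
      push_neg at hd
      nlinarith [mul_nonneg hθ₀ (neg_nonneg.mpr hd)]
    have hs0 : 0 < min a (min b c) := lt_min ha (lt_min hb hc)
    have hsc : min a (min b c) ≤ c := le_trans (min_le_right _ _) (min_le_right _ _)
    have hcval : Δx / 2 * c = θ * (v i - v (i - 1)) / 2 := by
      rw [hc_def]; field_simp
    constructor
    · refine le_trans (min_le_left _ _) ?_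
      nlinarith
    · refine le_trans ?_ (le_max_right _ _)
      nlinarith
  · obtain ⟨ha, hb, hc⟩ := h2
    have hprod : θ * (v i - v (i - 1)) < 0 := by
      have := mul_neg_of_neg_of_pos hc hΔx
      rwa [hc_def, div_mul_cancel₀ _ hΔx.ne'] at this
    have hd : v i - v (i - 1) < 0 := by
      by_contra hd
      push_neg at hd
      nlinarith [mul_nonneg hθ₀ hd]
    have hs0 : max a (max b c) < 0 := max_lt ha (max_lt hb hc)
    have hsc : c ≤ max a (max b c) := le_trans (le_max_right _ _) (le_max_right _ _)
    have hcval : Δx / 2 * c = θ * (v i - v (i - 1)) / 2 := by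
      rw [hc_def]; field_simp
    constructor
    · refine le_trans (min_le_right _ _) ?_
      nlinarith
    · refine le_trans ?_ (le_max_left _ _)
      nlinarith
  · simp only [mul_zero, sub_zero]
    exact ⟨min_le_right _ _, le_max_right _ _⟩

/-- Bounds on the minmod reconstruction for a system: the reconstructed total density
stays in `[0,α]`, the entrywise reconstructions are non-negative, and their sums are
bounded by `2α`. -/
theorem minmod_system_reconstruction_bounds
    (θ Δx α : ℝ) (hθ₀ : 0 ≤ θ) (hθ₂ : θ ≤ 2) (hΔx : 0 < Δx) (hα : 0 < α)
    (P : ℕ) (hP : 1 ≤ P) (ρ : ℤ → Fin P → ℝ)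
    (hρ : ∀ i p, 0 ≤ ρ i p) (hσ : ∀ i, totalDensity ρ i ≤ α) :
    ∀ i, (0 ≤ recE θ Δx (totalDensity ρ) i ∧ recE θ Δx (totalDensity ρ) i ≤ α) ∧
      (0 ≤ recW θ Δx (totalDensity ρ) i ∧ recW θ Δx (totalDensity ρ) i ≤ α) ∧
      (∀ p, 0 ≤ recEV θ Δx ρ i p) ∧ (∀ p, 0 ≤ recWV θ Δx ρ i p) ∧
      (0 ≤ ∑ p, recEV θ Δx ρ i p ∧ (∑ p, recEV θ Δx ρ i p) ≤ 2 * α) ∧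
      (0 ≤ ∑ p, recWV θ Δx ρ i p ∧ (∑ p, recWV θ Δx ρ i p) ≤ 2 * α) := by
  intro i
  have hσ0 : ∀ j, 0 ≤ totalDensity ρ j := fun j => Finset.sum_nonneg fun p _ => hρ j p
  have hent : ∀ j p, ρ j p ≤ α := fun j p =>
    le_trans (Finset.single_le_sum (fun q _ => hρ j q) (Finset.mem_univ p)) (hσ j)
  obtain ⟨hE1, hE2⟩ := recE_bounds θ Δx hθ₀ hθ₂ hΔx (totalDensity ρ) i
  obtain ⟨hW1, hW2⟩ := recW_bounds θ Δx hθ₀ hθ₂ hΔx (totalDensity ρ) i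
  have hEVlb : ∀ p, 0 ≤ recEV θ Δx ρ i p := fun p =>
    le_trans (le_min (hρ i p) (hρ (i + 1) p))
      (recE_bounds θ Δx hθ₀ hθ₂ hΔx (fun j => ρ j p) i).1
  have hWVlb : ∀ p, 0 ≤ recWV θ Δx ρ i p := fun p =>
    le_trans (le_min (hρ (i - 1) p) (hρ i p))
      (recW_bounds θ Δx hθ₀ hθ₂ hΔx (fun j => ρ j p) i).1
  have hEVub : ∀ p, recEV θ Δx ρ i p ≤ ρ i p + ρ (i + 1) p := fun p =>
    le_trans (recE_bounds θ Δx hθ₀ hθ₂ hΔx (fun j => ρ j p) i).2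
      (max_le (le_add_of_nonneg_right (hρ (i + 1) p)) (le_add_of_nonneg_left (hρ i p)))
  have hWVub : ∀ p, recWV θ Δx ρ i p ≤ ρ (i - 1) p + ρ i p := fun p =>
    le_trans (recW_bounds θ Δx hθ₀ hθ₂ hΔx (fun j => ρ j p) i).2
      (max_le (le_add_of_nonneg_right (hρ i p)) (le_add_of_nonneg_left (hρ (i - 1) p)))
  refine ⟨⟨le_trans (le_min (hσ0 i) (hσ0 (i + 1))) hE1,
      le_trans hE2 (max_le (hσ i) (hσ (i + 1)))⟩,
    ⟨le_trans (le_min (hσ0 (i - 1)) (hσ0 i)) hW1,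
      le_trans hW2 (max_le (hσ (i - 1)) (hσ i))⟩,
    hEVlb, hWVlb,
    ⟨Finset.sum_nonneg fun p _ => hEVlb p, ?_⟩,
    ⟨Finset.sum_nonneg fun p _ => hWVlb p, ?_⟩⟩
  · calc ∑ p, recEV θ Δx ρ i p ≤ ∑ p, (ρ i p + ρ (i + 1) p) :=
        Finset.sum_le_sum fun p _ => hEVub p
      _ = totalDensity ρ i + totalDensity ρ (i + 1) := by
        rw [Finset.sum_add_distrib]; rfl
      _ ≤ 2 * α := by linarith [hσ i, hσ (i + 1)]
  · calc ∑ p, recWV θ Δx ρ i p ≤ ∑ p, (ρ (i - 1) p + ρ i p) :=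
        Finset.sum_le_sum fun p _ => hWVub p
      _ = totalDensity ρ (i - 1) + totalDensity ρ i := by
        rw [Finset.sum_add_distrib]; rfl
      _ ≤ 2 * α := by linarith [hσ (i - 1), hσ i]
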